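/- arXiv:1308.3904 — 2 statements merged into one kernel-verified Lean document; each statement's English description precedes it below -/
import Mathlib

section
/- Let j be a gauge function as above on ℝ⁴, let α ∈ (1,2), H(x) = j(x)^α, and let z be a σ-periodic solution of ż(t) = J·∇H(z(t)) with H(z(t)) = 1 for all t, with fundamental solution γ (γ(0) = I, γ'(t) = J·H''(z(t))·γ(t)). Then there exist a real symplectic matrix P ∈ Sp(4,ℝ) and a real symplectic matrix M ∈ Sp(2,ℝ) such that γ(σ) = P⁻¹·N·P, where N is the 4×4 matrix which, in the coordinate ordering (q₁, q₂, p₁, p₂), acts as the Jordan block [[1,1],[0,1]] on the (q₁,p₁)-coordinates and as M on the (q₂,p₂)-coordinates; explicitly N₁₁ = N₃₃ = N₁₃ = 1, N₂₂ = M₁₁, N₂₄ = M₁₂, N₄₂ = M₂₁, N₄₄ = M₂₂, and all other entries of N are 0. -/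
/-!
The linearized flow `γ` is symplectic and transports every solution of the linearized equation
`u' = J H''(z) u`. Two such solutions come from the orbit itself: the velocity `ż`, and, since
`H` is homogeneous of degree `α` (so that `H''(x) x = (α - 1) ∇H(x)`), the field
`z(t) + (α - 2) t ż(t)`. By periodicity the monodromy `γ(σ)` fixes `ż(0)` and sends `z(0)` to
`z(0) + (α - 2) σ ż(0)`, while Euler's identity gives `ω(ż(0), z(0)) = α > 0`. So `γ(σ)` is a
nontrivial shear on the symplectic plane spanned by `ż(0)` and `z(0)`, which after rescaling is the
Jordan block `[[1,1],[0,1]]`; the `ω`-orthogonal complement of this plane is invariant, and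
`γ(σ)` acts there by some `M ∈ Sp(2, ℝ)`. Completing the rescaled pair to a symplectic basis
gives `P`.
-/

/-- The standard symplectic matrix `J = [[0, -I_n],[I_n, 0]]` acting on `ℝ^{2n}`. -/
noncomputable def Jmap (n : ℕ) (x : EuclideanSpace ℝ (Fin (2 * n))) :
    EuclideanSpace ℝ (Fin (2 * n)) :=
  WithLp.toLp 2 fun i => if h : (i : ℕ) < n then -x ⟨(i : ℕ) + n, by omega⟩
           else x ⟨(i : ℕ) - n, by have := i.isLt; omega⟩

/-- `j` is the gauge function of a `C³` compact hypersurface in `ℝ^{2n}` strictly star-shaped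
with respect to the origin: positively homogeneous of degree 1, positive away from `0`,
vanishing at `0`, and `C³` on `ℝ^{2n} ∖ {0}`. -/
def IsGauge (n : ℕ) (j : EuclideanSpace ℝ (Fin (2 * n)) → ℝ) : Prop :=
  (∀ t : ℝ, 0 < t → ∀ x, j (t • x) = t * j x) ∧
  (∀ x, x ≠ 0 → 0 < j x) ∧
  j 0 = 0 ∧
  ContDiffOn ℝ 3 j {(0 : EuclideanSpace ℝ (Fin (2 * n)))}ᶜ

/-- `(τ, y)` is a closed characteristic on `Σ = j⁻¹(1)`:
`τ > 0`, `ẏ(t) = J·∇j(y(t))`, `j(y(t)) = 1` and `y(t + τ) = y(t)` for all `t`. -/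
def IsClosedCharacteristic (n : ℕ) (j : EuclideanSpace ℝ (Fin (2 * n)) → ℝ)
    (τ : ℝ) (y : ℝ → EuclideanSpace ℝ (Fin (2 * n))) : Prop :=
  0 < τ ∧
  (∀ t : ℝ, HasDerivAt y (Jmap n (gradient j (y t))) t) ∧
  (∀ t : ℝ, j (y t) = 1) ∧
  (∀ t : ℝ, y (t + τ) = y t)


/-- The standard symplectic matrix `J = [[0, -I_n],[I_n, 0]]` as a `2n × 2n` matrix. -/
def Jmat (n : ℕ) : Matrix (Fin (2 * n)) (Fin (2 * n)) ℝ :=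
  Matrix.of fun i k => if (i : ℕ) + n = (k : ℕ) then -1 else if (k : ℕ) + n = (i : ℕ) then 1 else 0

/-- Membership in the real symplectic group `Sp(2n, ℝ)`: `Aᵀ·J·A = J`. -/
def IsSymplecticMat (n : ℕ) (A : Matrix (Fin (2 * n)) (Fin (2 * n)) ℝ) : Prop :=
  A.transpose * Jmat n * A = Jmat n

/-- The Hessian matrix of `H` at `x`, with entries the second partial derivatives. -/
noncomputable def hessMatrix (m : ℕ) (H : EuclideanSpace ℝ (Fin m) → ℝ)
    (x : EuclideanSpace ℝ (Fin m)) : Matrix (Fin m) (Fin m) ℝ :=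
  Matrix.of fun i k =>
    fderiv ℝ (fun y => fderiv ℝ H y (EuclideanSpace.single k 1)) x (EuclideanSpace.single i 1)

/-- In coordinates `(q₁, q₂, p₁, p₂)`, the `4 × 4` matrix acting as the Jordan block
`[[1,1],[0,1]]` on the `(q₁,p₁)`-coordinates and as `M` on the `(q₂,p₂)`-coordinates. -/
def Nmat (M : Matrix (Fin 2) (Fin 2) ℝ) : Matrix (Fin 4) (Fin 4) ℝ :=
  !![1, 0,     1, 0;
     0, M 0 0, 0, M 0 1;
     0, 0,     1, 0;
     0, M 1 0, 0, M 1 1]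

open Matrix

section Homogeneous

variable {E F : Type*} [NormedAddCommGroup E] [NormedSpace ℝ E]
  [NormedAddCommGroup F] [NormedSpace ℝ F] {f : E → F} {α : ℝ} {x : E}

theorem ContDiffAt.differentiableAt_fderiv (hf : ContDiffAt ℝ 2 f x) :
    DifferentiableAt ℝ (fderiv ℝ f) x :=
  (hf.fderiv_right (m := 1) le_rfl).differentiableAt one_ne_zero

theorem fderiv_apply_self_of_homogeneous (hf : ∀ t : ℝ, 0 < t → f (t • x) = t ^ α • f x)
    (hx : DifferentiableAt ℝ f x) : fderiv ℝ f x x = α • f x := by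
  have hray : HasDerivAt (fun t : ℝ => f (t • x)) (fderiv ℝ f x x) 1 := by
    have hx1 : HasFDerivAt f (fderiv ℝ f x) ((1 : ℝ) • x) := by
      rw [one_smul]; exact hx.hasFDerivAt
    simpa [Function.comp_def] using
      hx1.comp_hasDerivAt (1 : ℝ) ((hasDerivAt_id' (1 : ℝ)).smul_const x)
  have hpow : HasDerivAt (fun t : ℝ => t ^ α • f x) (α • f x) 1 := by
    simpa using (Real.hasDerivAt_rpow_const (x := 1) (p := α) (Or.inl one_ne_zero)).smul_const (f x)
  refine hray.unique (hpow.congr_of_eventuallyEq ?_)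
  filter_upwards [eventually_gt_nhds zero_lt_one] with t ht using hf t ht

theorem fderiv_smul_of_homogeneous (hf : ∀ t : ℝ, 0 < t → ∀ y, f (t • y) = t ^ α • f y)
    (hx : DifferentiableAt ℝ f x) {t : ℝ} (ht : 0 < t) :
    fderiv ℝ f (t • x) = t ^ (α - 1) • fderiv ℝ f x := by
  have hscaled : f = fun y => t ^ α • f (t⁻¹ • y) := by
    funext y
    rw [← hf t ht, smul_inv_smul₀ ht.ne']
  have hd : HasFDerivAt (fun y => t ^ α • f (t⁻¹ • y))
      (t ^ α • (fderiv ℝ f x).comp (t⁻¹ • ContinuousLinearMap.id ℝ E)) (t • x) := by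
    have hx' : HasFDerivAt f (fderiv ℝ f x) (t⁻¹ • t • x) := by
      rw [inv_smul_smul₀ ht.ne']; exact hx.hasFDerivAt
    exact (hx'.comp (t • x) (t⁻¹ • ContinuousLinearMap.id ℝ E).hasFDerivAt).const_smul (t ^ α)
  rw [← hscaled] at hd
  rw [hd.fderiv]
  ext v
  simp [smul_smul, Real.rpow_sub_one ht.ne', div_eq_mul_inv]

end Homogeneous

section Hessian

variable {m : ℕ} {H : EuclideanSpace ℝ (Fin m) → ℝ} {x : EuclideanSpace ℝ (Fin m)}

theorem gradient_apply_eq_fderiv (k : Fin m) :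
    gradient H x k = fderiv ℝ H x (EuclideanSpace.single k 1) := by
  rw [gradient, ← InnerProductSpace.toDual_symm_apply, EuclideanSpace.inner_single_right]
  simp

theorem ContinuousLinearMap.apply_eq_sum_single (L : EuclideanSpace ℝ (Fin m) →L[ℝ] ℝ)
    (w : EuclideanSpace ℝ (Fin m)) : L w = ∑ i, w i * L (EuclideanSpace.single i 1) := by
  conv_lhs => rw [← (EuclideanSpace.basisFun (Fin m) ℝ).sum_repr w]
  simp [map_sum]

theorem hessMatrix_apply (hH : DifferentiableAt ℝ (fderiv ℝ H) x) (i k : Fin m) :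
    hessMatrix m H x i k =
      fderiv ℝ (fderiv ℝ H) x (EuclideanSpace.single i 1) (EuclideanSpace.single k 1) := by
  simp [hessMatrix, fderiv_clm_apply hH (differentiableAt_const _)]

theorem isSymm_hessMatrix (hH : ContDiffAt ℝ 2 H x) : (hessMatrix m H x).IsSymm := by
  ext i k
  simp [hessMatrix_apply hH.differentiableAt_fderiv,
    hH.isSymmSndFDerivAt (by simp) (EuclideanSpace.single i 1)]

theorem hessMatrix_mulVec (hH : ContDiffAt ℝ 2 H x) (w : EuclideanSpace ℝ (Fin m)) :
    hessMatrix m H x *ᵥ ⇑w = fun k => fderiv ℝ (fderiv ℝ H) x w (EuclideanSpace.single k 1) := by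
  funext k
  rw [hH.isSymmSndFDerivAt (by simp), ContinuousLinearMap.apply_eq_sum_single _ w]
  simp [mulVec, dotProduct, hessMatrix_apply hH.differentiableAt_fderiv, mul_comm]

theorem hasDerivAt_gradient_comp {z : ℝ → EuclideanSpace ℝ (Fin m)}
    {z' : EuclideanSpace ℝ (Fin m)} {t : ℝ} (hH : ContDiffAt ℝ 2 H (z t)) (hz : HasDerivAt z z' t) :
    HasDerivAt (fun s => ⇑(gradient H (z s))) (hessMatrix m H (z t) *ᵥ ⇑z') t := by
  have hd := hH.differentiableAt_fderiv
  refine hasDerivAt_pi.2 fun k => ?_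
  simp only [gradient_apply_eq_fderiv, hessMatrix_mulVec hH]
  exact ((hd.clm_apply (differentiableAt_const _)).hasFDerivAt.comp_hasDerivAt t hz).congr_deriv
    (by simp [fderiv_clm_apply hd (differentiableAt_const _)])

variable {α : ℝ}

theorem gradient_dotProduct_self_of_homogeneous
    (hhom : ∀ t : ℝ, 0 < t → ∀ y, H (t • y) = t ^ α • H y) (hH : DifferentiableAt ℝ H x) :
    ⇑(gradient H x) ⬝ᵥ ⇑x = α * H x := by
  rw [← smul_eq_mul, ← fderiv_apply_self_of_homogeneous (fun t ht => hhom t ht x) hH,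
    ContinuousLinearMap.apply_eq_sum_single _ x]
  simp [dotProduct, gradient_apply_eq_fderiv, mul_comm]

theorem hessMatrix_mulVec_self_of_homogeneous
    (hhom : ∀ t : ℝ, 0 < t → ∀ y, H (t • y) = t ^ α • H y) (hH : ContDiffAt ℝ 2 H x) :
    hessMatrix m H x *ᵥ ⇑x = (α - 1) • ⇑(gradient H x) := by
  have heuler := fderiv_apply_self_of_homogeneous
    (fun t ht => fderiv_smul_of_homogeneous hhom (hH.differentiableAt (by norm_num)) ht)
    hH.differentiableAt_fderiv
  rw [hessMatrix_mulVec hH, heuler]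
  funext k
  simp [gradient_apply_eq_fderiv]

end Hessian

section Gauge

variable {n : ℕ} {j H : EuclideanSpace ℝ (Fin (2 * n)) → ℝ} {α : ℝ}

theorem IsGauge.nonneg (hj : IsGauge n j) (x : EuclideanSpace ℝ (Fin (2 * n))) : 0 ≤ j x := by
  rcases eq_or_ne x 0 with rfl | hx
  · exact hj.2.2.1.ge
  · exact (hj.2.1 x hx).le

theorem IsGauge.rpow_smul (hj : IsGauge n j) (hH : ∀ x, H x = j x ^ α) {t : ℝ} (ht : 0 < t)
    (x : EuclideanSpace ℝ (Fin (2 * n))) : H (t • x) = t ^ α • H x := by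
  rw [hH, hH, hj.1 t ht x, smul_eq_mul, Real.mul_rpow ht.le (hj.nonneg x)]

theorem IsGauge.contDiffAt_rpow (hj : IsGauge n j) (hH : ∀ x, H x = j x ^ α)
    {x : EuclideanSpace ℝ (Fin (2 * n))} (hx : x ≠ 0) : ContDiffAt ℝ 3 H x := by
  rw [show H = fun y => j y ^ α from funext hH]
  have hjx : ContDiffAt ℝ 3 j x :=
    hj.2.2.2.contDiffAt (isOpen_compl_singleton.mem_nhds hx)
  exact (Real.contDiffAt_rpow_const_of_ne (hj.2.1 x hx).ne').comp x hjx

end Gauge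

theorem transpose_mul_mul_apply {ι : Type*} [Fintype ι] (A B C : Matrix ι ι ℝ) (i k : ι) :
    (Aᵀ * B * C) i k = (fun a => A a i) ⬝ᵥ (B *ᵥ fun b => C b k) := by
  simp only [mul_apply, transpose_apply, dotProduct, mulVec, Finset.mul_sum, Finset.sum_mul]
  rw [Finset.sum_comm]
  exact Finset.sum_congr rfl fun _ _ => Finset.sum_congr rfl fun _ _ => by ring

section Symplectic

variable (n : ℕ)

theorem Jmap_eq_mulVec (x : EuclideanSpace ℝ (Fin (2 * n))) : ⇑(Jmap n x) = Jmat n *ᵥ ⇑x := by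
  funext i
  simp only [Jmap, mulVec, dotProduct, Jmat, of_apply]
  split_ifs with h
  · rw [Finset.sum_eq_single ⟨i + n, by omega⟩]
    · simp
    · intro b _ hb
      rw [if_neg (fun h' => hb (Fin.ext h'.symm)), if_neg (by omega), zero_mul]
    · simp
  · rw [Finset.sum_eq_single ⟨i - n, by omega⟩]
    · simp [show ¬ (i : ℕ) + n = i - n by omega, show (i : ℕ) - n + n = i by omega]
    · intro b _ hb
      rw [if_neg (by omega), if_neg (fun h' => hb (Fin.ext (by simp; omega))), zero_mul]
    · simp

theorem Jmap_Jmap (x : EuclideanSpace ℝ (Fin (2 * n))) : Jmap n (Jmap n x) = -x := by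
  ext i
  have := i.isLt
  simp only [Jmap, PiLp.neg_apply]
  split_ifs with h₁ h₂ h₂
  · omega
  · simp [show (i : ℕ) + n - n = i by omega]
  · simp [show (i : ℕ) - n + n = i by omega]
  · omega

theorem Jmat_mul_self : Jmat n * Jmat n = -1 := by
  refine mulVec_injective (funext fun v => ?_)
  have h := congrArg WithLp.ofLp (Jmap_Jmap n (WithLp.toLp 2 v))
  rw [← mulVec_mulVec]
  simpa [Jmap_eq_mulVec, neg_mulVec] using h

theorem Jmat_transpose : (Jmat n)ᵀ = -Jmat n := by
  ext i k
  have := i.isLt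
  rw [neg_apply]
  simp only [transpose_apply, Jmat, of_apply]
  split_ifs <;> first | omega | norm_num

noncomputable def symplecticForm : (Fin (2 * n) → ℝ) →ₗ[ℝ] (Fin (2 * n) → ℝ) →ₗ[ℝ] ℝ :=
  Matrix.toLinearMap₂' ℝ (Jmat n)

theorem symplecticForm_apply (x y : Fin (2 * n) → ℝ) :
    symplecticForm n x y = x ⬝ᵥ (Jmat n *ᵥ y) :=
  Matrix.toLinearMap₂'_apply' _ _ _

theorem symplecticForm_swap (x y : Fin (2 * n) → ℝ) :
    symplecticForm n y x = -symplecticForm n x y := by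
  rw [symplecticForm_apply, symplecticForm_apply, dotProduct_comm, dotProduct_mulVec,
    ← mulVec_transpose, Jmat_transpose, neg_mulVec, neg_dotProduct, neg_neg]

theorem symplecticForm_Jmat_mulVec (x y : Fin (2 * n) → ℝ) :
    symplecticForm n (Jmat n *ᵥ x) y = x ⬝ᵥ y := by
  rw [symplecticForm_apply, dotProduct_mulVec, ← mulVec_transpose, mulVec_mulVec, Jmat_transpose,
    neg_mul, Jmat_mul_self, neg_neg, one_mulVec]

theorem symplecticForm_self (x : Fin (2 * n) → ℝ) : symplecticForm n x x = 0 := by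
  have := symplecticForm_swap n x x
  linarith

theorem isSymplecticMat_iff (A : Matrix (Fin (2 * n)) (Fin (2 * n)) ℝ) :
    IsSymplecticMat n A ↔ ∀ i k, symplecticForm n (Aᵀ i) (Aᵀ k) = Jmat n i k := by
  simp only [IsSymplecticMat, ← Matrix.ext_iff, transpose_mul_mul_apply, symplecticForm_apply]
  rfl

end Symplectic

namespace IsSymplecticMat

variable {n : ℕ} {A B : Matrix (Fin (2 * n)) (Fin (2 * n)) ℝ}

theorem mul (hA : IsSymplecticMat n A) (hB : IsSymplecticMat n B) :
    IsSymplecticMat n (A * B) := by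
  rw [IsSymplecticMat, transpose_mul, ← mul_assoc, mul_assoc Bᵀ, mul_assoc Bᵀ, hA, hB]

theorem isUnit_det (hA : IsSymplecticMat n A) : IsUnit A.det :=
  isUnit_det_of_left_inverse (B := -(Jmat n * Aᵀ * Jmat n)) <| by
    rw [neg_mul, mul_assoc, mul_assoc, ← mul_assoc Aᵀ, hA, Jmat_mul_self, neg_neg]

theorem inv (hA : IsSymplecticMat n A) : IsSymplecticMat n A⁻¹ := by
  have hAA : A * A⁻¹ = 1 := mul_nonsing_inv A hA.isUnit_det
  calc (A⁻¹)ᵀ * Jmat n * A⁻¹ = (A⁻¹)ᵀ * (Aᵀ * Jmat n * A) * A⁻¹ := by rw [hA]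
    _ = (A * A⁻¹)ᵀ * Jmat n * (A * A⁻¹) := by simp only [transpose_mul, mul_assoc]
    _ = Jmat n := by rw [hAA, transpose_one, one_mul, mul_one]

end IsSymplecticMat

section LinearHamiltonian

variable {ι : Type*} [Fintype ι]

def SolvesLinearHamiltonian (J : Matrix ι ι ℝ) (S : ℝ → Matrix ι ι ℝ) (u : ℝ → ι → ℝ) : Prop :=
  ∀ t, HasDerivAt u ((J * S t) *ᵥ u t) t

theorem HasDerivAt.const_mulVec {y : ℝ → ι → ℝ} {y' : ι → ℝ} {t : ℝ} (A : Matrix ι ι ℝ)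
    (hy : HasDerivAt y y' t) : HasDerivAt (fun s => A *ᵥ y s) (A *ᵥ y') t :=
  hasDerivAt_pi.2 fun i => HasDerivAt.fun_sum fun k _ => (hasDerivAt_pi.1 hy k).const_mul (A i k)

theorem HasDerivAt.dotProduct_mulVec {x y : ℝ → ι → ℝ} {x' y' : ι → ℝ} {t : ℝ}
    (A : Matrix ι ι ℝ) (hx : HasDerivAt x x' t) (hy : HasDerivAt y y' t) :
    HasDerivAt (fun s => x s ⬝ᵥ (A *ᵥ y s)) (x' ⬝ᵥ (A *ᵥ y t) + x t ⬝ᵥ (A *ᵥ y')) t := by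
  have h := HasDerivAt.fun_sum (u := Finset.univ) fun i _ =>
    (hasDerivAt_pi.1 hx i).fun_mul (hasDerivAt_pi.1 (hy.const_mulVec A) i)
  simpa [dotProduct, Finset.sum_add_distrib] using h

variable {J : Matrix ι ι ℝ} {S : ℝ → Matrix ι ι ℝ}

theorem SolvesLinearHamiltonian.add_smul_mul {v x : ℝ → ι → ℝ} {β : ℝ}
    (hv : SolvesLinearHamiltonian J S v) (hx : ∀ t, HasDerivAt x (v t) t)
    (hxv : ∀ t, (J * S t) *ᵥ x t = (β + 1) • v t) :
    SolvesLinearHamiltonian J S fun t => x t + (β * t) • v t := by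
  intro t
  refine ((hx t).add (((hasDerivAt_id' t).const_mul β).smul (hv t))).congr_deriv ?_
  rw [mulVec_add, mulVec_smul, hxv, mul_one]
  module

variable [DecidableEq ι]

theorem dotProduct_mulVec_add_eq_zero (hJ : Jᵀ = -J) (hJJ : J * J = -1) {M : Matrix ι ι ℝ}
    (hM : M.IsSymm) (x y : ι → ℝ) :
    (J * M) *ᵥ x ⬝ᵥ (J *ᵥ y) + x ⬝ᵥ (J *ᵥ ((J * M) *ᵥ y)) = 0 := by
  have h₁ : (J * M) *ᵥ x ⬝ᵥ (J *ᵥ y) = x ⬝ᵥ (M *ᵥ y) := by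
    rw [dotProduct_comm, dotProduct_mulVec, vecMul_mulVec, ← mul_assoc, hJ, neg_mul, hJJ, neg_neg,
      one_mul, ← mulVec_transpose, hM, dotProduct_comm]
  have h₂ : x ⬝ᵥ (J *ᵥ ((J * M) *ᵥ y)) = -(x ⬝ᵥ (M *ᵥ y)) := by
    rw [mulVec_mulVec, ← mul_assoc, hJJ, neg_one_mul, neg_mulVec, dotProduct_neg]
  rw [h₁, h₂, add_neg_cancel]

theorem SolvesLinearHamiltonian.dotProduct_mulVec_eq (hJ : Jᵀ = -J) (hJJ : J * J = -1)
    (hS : ∀ t, (S t).IsSymm) {x y : ℝ → ι → ℝ} (hx : SolvesLinearHamiltonian J S x)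
    (hy : SolvesLinearHamiltonian J S y) (t : ℝ) :
    x t ⬝ᵥ (J *ᵥ y t) = x 0 ⬝ᵥ (J *ᵥ y 0) := by
  have hd : ∀ s, HasDerivAt (fun s => x s ⬝ᵥ (J *ᵥ y s)) 0 s := fun s => by
    have h := (hx s).dotProduct_mulVec J (hy s)
    rwa [dotProduct_mulVec_add_eq_zero hJ hJJ (hS s)] at h
  exact is_const_of_deriv_eq_zero (fun s => (hd s).differentiableAt) (fun s => (hd s).deriv) t 0

variable {γ : ℝ → Matrix ι ι ℝ}

theorem transpose_mul_mul_eq_of_fundamental (hJ : Jᵀ = -J) (hJJ : J * J = -1)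
    (hS : ∀ t, (S t).IsSymm) (hγ0 : γ 0 = 1)
    (hγ : ∀ k, SolvesLinearHamiltonian J S fun s i => γ s i k) (t : ℝ) :
    (γ t)ᵀ * J * γ t = J := by
  ext i k
  rw [transpose_mul_mul_apply, (hγ i).dotProduct_mulVec_eq hJ hJJ hS (hγ k), hγ0]
  simp [one_apply, dotProduct, mulVec]

theorem eq_mulVec_of_fundamental (hJ : Jᵀ = -J) (hJJ : J * J = -1)
    (hS : ∀ t, (S t).IsSymm) (hγ0 : γ 0 = 1)
    (hγ : ∀ k, SolvesLinearHamiltonian J S fun s i => γ s i k) {u : ℝ → ι → ℝ}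
    (hu : SolvesLinearHamiltonian J S u) (t : ℝ) : u t = γ t *ᵥ u 0 := by
  have hsymp := transpose_mul_mul_eq_of_fundamental hJ hJJ hS hγ0 hγ t
  have hconst : ((γ t)ᵀ * J) *ᵥ u t = J *ᵥ u 0 := by
    ext i
    rw [← mulVec_mulVec]
    change (fun a => γ t a i) ⬝ᵥ (J *ᵥ u t) = _
    rw [(hγ i).dotProduct_mulVec_eq hJ hJJ hS hu, hγ0]
    simp [one_apply, dotProduct]
  have hinv : (γ t * -J) * ((γ t)ᵀ * J) = 1 := by
    refine mul_eq_one_comm.1 ?_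
    rw [← mul_assoc, hsymp, mul_neg, hJJ, neg_neg]
  calc u t = (γ t * -J) *ᵥ (((γ t)ᵀ * J) *ᵥ u t) := by rw [mulVec_mulVec, hinv, one_mulVec]
    _ = γ t *ᵥ u 0 := by rw [hconst, mulVec_mulVec, mul_assoc, neg_mul, hJJ, neg_neg, mul_one]

end LinearHamiltonian

section NormalForm

theorem exists_ne_zero_symplecticForm_eq_zero {n : ℕ} (hn : 1 < n) (e f : Fin (2 * n) → ℝ) :
    ∃ w ≠ 0, symplecticForm n e w = 0 ∧ symplecticForm n f w = 0 := by
  let L : (Fin (2 * n) → ℝ) →ₗ[ℝ] Fin 2 → ℝ :=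
    LinearMap.pi ![symplecticForm n e, symplecticForm n f]
  obtain ⟨w, hw, hw0⟩ :=
    (Submodule.ne_bot_iff _).1 (L.ker_ne_bot_of_finrank_lt (by simp; omega))
  exact ⟨w, hw0, congrFun hw 0, congrFun hw 1⟩

theorem exists_isSymplecticMat_mulVec_single {e f : Fin 4 → ℝ}
    (hef : symplecticForm 2 e f = -1) :
    ∃ Q, IsSymplecticMat 2 Q ∧ Q *ᵥ Pi.single 0 1 = e ∧ Q *ᵥ Pi.single 2 1 = f := by
  have hfe : symplecticForm 2 f e = 1 := by rw [symplecticForm_swap, hef, neg_neg]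
  obtain ⟨w, hw0, hew, hfw⟩ := exists_ne_zero_symplecticForm_eq_zero one_lt_two e f
  have hwe : symplecticForm 2 w e = 0 := by rw [symplecticForm_swap, hew, neg_zero]
  have hwf : symplecticForm 2 w f = 0 := by rw [symplecticForm_swap, hfw, neg_zero]
  set c := -(Jmat 2 *ᵥ w)
  have hwc : 0 < symplecticForm 2 w c := by
    rw [symplecticForm_apply, mulVec_neg, mulVec_mulVec, Jmat_mul_self, neg_mulVec, neg_neg,
      one_mulVec]
    simpa using dotProduct_self_star_pos_iff.2 hw0
  -- `p` is the projection of `c` onto the symplectic complement of `span {e, f}`.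
  set p := c - symplecticForm 2 f c • e + symplecticForm 2 e c • f
  set f₂ := -(symplecticForm 2 w c)⁻¹ • p
  have hef₂ : symplecticForm 2 e f₂ = 0 := by
    simp only [p, f₂, map_add, map_sub, map_smul, smul_eq_mul, symplecticForm_self, hef]
    ring
  have hff₂ : symplecticForm 2 f f₂ = 0 := by
    simp only [p, f₂, map_add, map_sub, map_smul, smul_eq_mul, symplecticForm_self, hfe]
    ring
  have hwf₂ : symplecticForm 2 w f₂ = -1 := by
    simp only [p, f₂, map_add, map_sub, map_smul, smul_eq_mul, hwe, hwf]
    field_simp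
    ring
  set B : Matrix (Fin (2 * 2)) (Fin (2 * 2)) ℝ := of ![e, w, f, f₂]
  have hB : B 0 = e ∧ B 1 = w ∧ B 2 = f ∧ B 3 = f₂ := ⟨rfl, rfl, rfl, rfl⟩
  refine ⟨Bᵀ, (isSymplecticMat_iff 2 _).2 fun i k => ?_, ?_, ?_⟩
  · rw [transpose_transpose]
    fin_cases i <;> fin_cases k <;>
      simp only [Fin.reduceFinMk, Fin.isValue, Fin.zero_eta, Fin.mk_one, hB] <;>
      first
      | exact symplecticForm_self 2 _
      | simp [Jmat, hef, hfe, hew, hfw, hwe, hwf, hef₂, hff₂, hwf₂,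
          symplecticForm_swap 2 e f₂, symplecticForm_swap 2 w f₂, symplecticForm_swap 2 f f₂]
  · rw [mulVec_single_one]; exact hB.1
  · rw [mulVec_single_one]; exact hB.2.2.1

theorem isSymplecticMat_one_iff_det (M : Matrix (Fin 2) (Fin 2) ℝ) :
    IsSymplecticMat 1 M ↔ M.det = 1 := by
  rw [det_fin_two, IsSymplecticMat, ← Matrix.ext_iff]
  simp [Fin.forall_fin_two, Jmat, mul_apply, Fin.sum_univ_two]
  constructor
  · rintro ⟨⟨-, h⟩, -⟩
    linarith
  · intro h
    exact ⟨⟨by ring, by linarith⟩, by linarith, by ring⟩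

theorem exists_eq_Nmat {G : Matrix (Fin 4) (Fin 4) ℝ} (hG : IsSymplecticMat 2 G)
    (h₀ : G *ᵥ Pi.single 0 1 = Pi.single 0 1)
    (h₂ : G *ᵥ Pi.single 2 1 = Pi.single 2 1 + Pi.single 0 1) :
    ∃ M, IsSymplecticMat 1 M ∧ G = Nmat M := by
  have hc₀ : ∀ i, G i 0 = (Pi.single 0 1 : Fin 4 → ℝ) i := fun i => by
    simpa [mulVec_single_one] using congrFun h₀ i
  have hc₂ : ∀ i, G i 2 = (Pi.single 2 1 + Pi.single 0 1 : Fin 4 → ℝ) i := fun i => by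
    simpa [mulVec_single_one] using congrFun h₂ i
  have hω : ∀ i k, (Gᵀ * Jmat 2 * G) i k = Jmat 2 i k := fun i k => by rw [hG]
  have h01 := hω 0 1
  have h21 := hω 2 1
  have h03 := hω 0 3
  have h23 := hω 2 3
  have h13 := hω 1 3
  simp [mul_apply, Fin.sum_univ_four, Jmat, hc₀, hc₂] at h01 h21 h03 h23 h13
  refine ⟨!![G 1 1, G 1 3; G 3 1, G 3 3], (isSymplecticMat_one_iff_det _).2 ?_, ?_⟩
  · simp only [h01, h03, zero_mul, mul_zero, zero_add] at h13
    simp only [det_fin_two, of_apply, cons_val', cons_val_zero, cons_val_fin_one, cons_val_one]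
    linarith
  · ext i k
    fin_cases i <;> fin_cases k <;> simp [Nmat, hc₀, hc₂] <;> linarith

theorem exists_conj_Nmat {G : Matrix (Fin 4) (Fin 4) ℝ} (hG : IsSymplecticMat 2 G)
    {e f : Fin 4 → ℝ} (hef : symplecticForm 2 e f = -1) (he : G *ᵥ e = e)
    (hf : G *ᵥ f = f + e) :
    ∃ P M, IsSymplecticMat 2 P ∧ IsSymplecticMat 1 M ∧ G = P⁻¹ * Nmat M * P := by
  obtain ⟨Q, hQ, hQ₀, hQ₂⟩ := exists_isSymplecticMat_mulVec_single hef
  have hQQ : Q⁻¹ * Q = 1 := nonsing_inv_mul Q hQ.isUnit_det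
  have hQinv : ∀ v, Q⁻¹ *ᵥ (Q *ᵥ v) = v := fun v => by rw [mulVec_mulVec, hQQ, one_mulVec]
  obtain ⟨M, hM, hGM⟩ := exists_eq_Nmat (G := Q⁻¹ * G * Q) (hQ.inv.mul hG |>.mul hQ)
    (by rw [← mulVec_mulVec, hQ₀, ← mulVec_mulVec, he, ← hQ₀, hQinv])
    (by rw [← mulVec_mulVec, hQ₂, ← mulVec_mulVec, hf, ← hQ₂, ← hQ₀, ← mulVec_add, hQinv])
  refine ⟨Q⁻¹, M, hQ.inv, hM, ?_⟩
  rw [nonsing_inv_nonsing_inv Q hQ.isUnit_det, ← hGM, ← mul_assoc, ← mul_assoc,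
    mul_nonsing_inv Q hQ.isUnit_det, one_mul, mul_assoc, mul_nonsing_inv Q hQ.isUnit_det, mul_one]

theorem exists_conj_Nmat_of_shear {G : Matrix (Fin 4) (Fin 4) ℝ} (hG : IsSymplecticMat 2 G)
    {a b : Fin 4 → ℝ} {c : ℝ} (ha : G *ᵥ a = a) (hb : G *ᵥ b = b + c • a)
    (hc : c * symplecticForm 2 a b < 0) :
    ∃ P M, IsSymplecticMat 2 P ∧ IsSymplecticMat 1 M ∧ G = P⁻¹ * Nmat M * P := by
  set μ := √(-(c * symplecticForm 2 a b))⁻¹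
  have hμ : μ * μ = (-(c * symplecticForm 2 a b))⁻¹ :=
    Real.mul_self_sqrt (inv_nonneg.2 (neg_nonneg.2 hc.le))
  refine exists_conj_Nmat hG (e := (μ * c) • a) (f := μ • b) ?_ ?_ ?_
  · simp only [map_smul, LinearMap.smul_apply, smul_eq_mul]
    calc μ * (μ * c * symplecticForm 2 a b) = (μ * μ) * (c * symplecticForm 2 a b) := by ring
      _ = -1 := by rw [hμ, inv_neg, neg_mul, inv_mul_cancel₀ hc.ne]
  · rw [mulVec_smul, ha]
  · rw [mulVec_smul, hb, smul_add, smul_smul]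

end NormalForm

section Orbit

variable {n : ℕ} {H : EuclideanSpace ℝ (Fin (2 * n)) → ℝ} {z : ℝ → EuclideanSpace ℝ (Fin (2 * n))}

theorem solvesLinearHamiltonian_velocity (hH : ∀ t, ContDiffAt ℝ 2 H (z t))
    (hz : ∀ t, HasDerivAt z (Jmap n (gradient H (z t))) t) :
    SolvesLinearHamiltonian (Jmat n) (fun t => hessMatrix (2 * n) H (z t))
      fun t => Jmat n *ᵥ ⇑(gradient H (z t)) := fun t => by
  refine ((hasDerivAt_gradient_comp (hH t) (hz t)).const_mulVec (Jmat n)).congr_deriv ?_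
  rw [Jmap_eq_mulVec, mulVec_mulVec]

theorem solvesLinearHamiltonian_add_smul_velocity {α : ℝ}
    (hhom : ∀ t : ℝ, 0 < t → ∀ y, H (t • y) = t ^ α • H y) (hH : ∀ t, ContDiffAt ℝ 2 H (z t))
    (hz : ∀ t, HasDerivAt z (Jmap n (gradient H (z t))) t) :
    SolvesLinearHamiltonian (Jmat n) (fun t => hessMatrix (2 * n) H (z t))
      fun t => ⇑(z t) + ((α - 2) * t) • (Jmat n *ᵥ ⇑(gradient H (z t))) := by
  refine (solvesLinearHamiltonian_velocity hH hz).add_smul_mul (fun t => ?_) fun t => ?_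
  · simpa [Jmap_eq_mulVec, Function.comp_def, ContinuousLinearEquiv.coe_coe,
      PiLp.coe_continuousLinearEquiv] using (PiLp.hasFDerivAt_ofLp 2 (z t)).comp_hasDerivAt t (hz t)
  · rw [← mulVec_mulVec, hessMatrix_mulVec_self_of_homogeneous hhom (hH t), mulVec_smul]
    congr 1
    ring

end Orbit

/-- The monodromy matrix of the unique (up to iteration and geometric equivalence) closed
characteristic on a star-shaped hypersurface in `ℝ⁴` is symplectically conjugate to
`N₁(1,1) ⋄ M` for some `M ∈ Sp(2,ℝ)`. -/
theorem monodromy_normal_form_R4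
    (j : EuclideanSpace ℝ (Fin 4) → ℝ) (hj : IsGauge 2 j)
    (α : ℝ) (hα1 : 1 < α) (hα2 : α < 2)
    (H : EuclideanSpace ℝ (Fin 4) → ℝ) (hH : ∀ x, H x = j x ^ α)
    (σ : ℝ) (z : ℝ → EuclideanSpace ℝ (Fin 4))
    (hσ : 0 < σ)
    (hz : ∀ t : ℝ, HasDerivAt z (Jmap 2 (gradient H (z t))) t)
    (hz1 : ∀ t : ℝ, H (z t) = 1)
    (hzper : ∀ t : ℝ, z (t + σ) = z t)
    (γ : ℝ → Matrix (Fin 4) (Fin 4) ℝ)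
    (hγ0 : γ 0 = 1)
    (hγ : ∀ (t : ℝ) (i k : Fin 4),
      HasDerivAt (fun s => γ s i k) ((Jmat 2 * hessMatrix 4 H (z t) * γ t) i k) t) :
    ∃ (P : Matrix (Fin 4) (Fin 4) ℝ) (M : Matrix (Fin 2) (Fin 2) ℝ),
      IsSymplecticMat 2 P ∧ IsSymplecticMat 1 M ∧ γ σ = P⁻¹ * Nmat M * P := by
  have hα : 0 < α := by linarith
  have hhom := fun t (ht : 0 < t) => hj.rpow_smul hH ht
  have hz0 : ∀ t, z t ≠ 0 := fun t h => by
    simpa [h, hH, hj.2.2.1, Real.zero_rpow hα.ne'] using hz1 t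
  have hC2 : ∀ t, ContDiffAt ℝ 2 H (z t) := fun t =>
    (hj.contDiffAt_rpow hH (hz0 t)).of_le (by norm_num)
  have hS : ∀ t, (hessMatrix 4 H (z t)).IsSymm := fun t => isSymm_hessMatrix (hC2 t)
  have hcol : ∀ k, SolvesLinearHamiltonian (Jmat 2) (fun t => hessMatrix 4 H (z t))
      fun s i => γ s i k := fun k t => hasDerivAt_pi.2 fun i => hγ t i k
  have hflow := fun {u} =>
    eq_mulVec_of_fundamental (Jmat_transpose 2) (Jmat_mul_self 2) hS hγ0 hcol (u := u)
  have hper : z σ = z 0 := by simpa using hzper 0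
  refine exists_conj_Nmat_of_shear (a := Jmat 2 *ᵥ ⇑(gradient H (z 0))) (b := ⇑(z 0))
    (c := (α - 2) * σ)
    (transpose_mul_mul_eq_of_fundamental (Jmat_transpose 2) (Jmat_mul_self 2) hS hγ0 hcol σ)
    ?_ ?_ ?_
  · simpa [hper] using (hflow (solvesLinearHamiltonian_velocity hC2 hz) σ).symm
  · simpa [hper] using (hflow (solvesLinearHamiltonian_add_smul_velocity hhom hC2 hz) σ).symm
  · rw [symplecticForm_Jmat_mulVec, gradient_dotProduct_self_of_homogeneous hhom
      ((hC2 0).differentiableAt (by norm_num)), hz1 0, mul_one]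
    exact mul_neg_of_neg_of_pos (mul_neg_of_neg_of_pos (by linarith) hσ) hα
end

section
/- Let p and q be coprime integers with 1 ≤ p < q, q ≥ 2 and 2p ≠ q, and set k₁ = q − 1 − p. Let M be the formal Laurent series over ℚ whose coefficient in degree d ∈ ℤ equals card{m ∈ ℕ : m ≥ 1, q ∤ m, 2·⌈m·p/q⌉ − 4 = d} + k₁ · card{j ∈ ℕ : j ≥ 1, 2·j·p − 3 = d} (both sets are finite for every d). Let P be the formal Laurent series with coefficient 1 in every even degree 2m, m ≥ 0, and 0 elsewhere. Then there is no formal Laurent series U with all coefficients nonnegative such that M − P = (1 + t)·U. -/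
/-!
Comparing coefficients in `M - P = (1 + t) U` gives `f d = U d + U (d - 1)` for `f = M - P`, so
the alternating sum telescopes: `U (2p - 3) = ∑_{j < p} (f (2j - 1) - f (2j - 2))`, because `U`
vanishes below degree `-2` together with `f`. In the even degrees `-2, …, 2p - 4` the series `M`
counts exactly the nondegenerate iterates `m = 1, …, q - 1` (as `⌈mp/q⌉ ≤ p ↔ m ≤ q`) and `P`
counts `p - 1` ones; the only odd degree in range is `2p - 3`, where the first degenerate iterate
contributes `k₁`. Hence `U (2p - 3) = k₁ - (q - 1) + (p - 1) = -1 < 0`.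
-/

open Finset HahnSeries

section

variable {R : Type*}

theorem coeff_one_add_single_one_mul [Semiring R] (U : LaurentSeries R) (d : ℤ) :
    ((1 + single (1 : ℤ) (1 : R)) * U).coeff d = U.coeff d + U.coeff (d - 1) := by
  rw [add_mul, one_mul, coeff_add, coeff_single_mul, one_mul]

theorem coeff_eq_zero_of_coeff_one_add_single_one_mul [Semiring R] {U : LaurentSeries R} {n : ℤ}
    (h : ∀ d < n, ((1 + single (1 : ℤ) (1 : R)) * U).coeff d = 0) {d : ℤ} (hd : d < n) :
    U.coeff d = 0 := by
  by_contra hUd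
  have hU : U ≠ 0 := by rintro rfl; exact hUd rfl
  have hord : U.order ≤ d := order_le_of_coeff_ne_zero hUd
  have h₀ := h U.order (by omega)
  rw [coeff_one_add_single_one_mul, coeff_eq_zero_of_lt_order (sub_one_lt _), add_zero] at h₀
  exact hU (coeff_order_eq_zero.mp h₀)

theorem sum_range_sub_of_eq_add_pred [AddCommGroup R] {f U : ℤ → R}
    (h : ∀ d, f d = U d + U (d - 1)) (n : ℤ) (k : ℕ) :
    ∑ j ∈ range k, (f (n + 2 * j + 1) - f (n + 2 * j)) = U (n + 2 * k - 1) - U (n - 1) := by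
  have := sum_range_sub (fun j : ℕ => U (n + 2 * j - 1)) k
  simp only [CharP.cast_eq_zero, mul_zero, add_zero] at this
  rw [← this]
  refine sum_congr rfl fun j _ => ?_
  rw [h, h, add_sub_cancel_right, Nat.cast_succ,
    show n + 2 * ((j : ℤ) + 1) - 1 = n + 2 * j + 1 by ring]
  abel

end

/- The m-th iterate with q ∤ m has index 2⌈mp/q⌉ - 4; the degenerate iterate m = jq has index
2jp - 4 and contributes k₁ in degree 2jp - 3 (the weight k₁ is applied in the theorem). -/
noncomputable def nondegIterCount (p q : ℕ) (d : ℤ) : ℕ :=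
  Set.ncard {m : ℕ | 1 ≤ m ∧ ¬ (q ∣ m) ∧ 2 * ⌈((m : ℚ) * (p : ℚ)) / (q : ℚ)⌉ - 4 = d}

noncomputable def degenIterCount (p : ℕ) (d : ℤ) : ℕ :=
  Set.ncard {m : ℕ | 1 ≤ m ∧ 2 * (m : ℤ) * (p : ℤ) - 3 = d}

section

variable {p q : ℕ}

theorem one_le_ceil_mul_div (hp : 0 < p) (hq : 0 < q) {m : ℕ} (hm : 1 ≤ m) :
    1 ≤ ⌈(m * p : ℚ) / q⌉ :=
  Int.one_le_ceil_iff.mpr (by positivity)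

theorem ceil_mul_div_le_iff (hp : 0 < p) (hq : 0 < q) (m : ℕ) :
    ⌈(m * p : ℚ) / q⌉ ≤ p ↔ m ≤ q := by
  rw [Int.ceil_le, div_le_iff₀ (by positivity), Int.cast_natCast, mul_comm (p : ℚ),
    mul_le_mul_iff_left₀ (by positivity)]
  exact_mod_cast Iff.rfl

theorem nondegIterCount_eq_zero_of_lt (hp : 0 < p) (hq : 0 < q) {d : ℤ} (hd : d < -2) :
    nondegIterCount p q d = 0 := by
  rw [nondegIterCount]
  convert Set.ncard_empty ℕ
  refine Set.eq_empty_of_forall_notMem ?_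
  rintro m ⟨hm, -, rfl⟩
  have := one_le_ceil_mul_div hp hq hm
  omega

theorem nondegIterCount_of_odd {d : ℤ} (hd : Odd d) : nondegIterCount p q d = 0 := by
  rw [nondegIterCount]
  convert Set.ncard_empty ℕ
  refine Set.eq_empty_of_forall_notMem ?_
  rintro m ⟨-, -, rfl⟩
  exact Int.not_even_iff_odd.mpr hd ⟨_ - 2, by ring⟩

theorem sum_range_nondegIterCount (hp : 0 < p) (hq : 0 < q) :
    ∑ j ∈ range p, nondegIterCount p q (2 * j - 2) = q - 1 := by
  have hfiber : ∀ j ∈ range p, nondegIterCount p q (2 * j - 2) =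
      #{m ∈ Icc 1 (q - 1) | (⌈((m : ℕ) * p : ℚ) / q⌉ - 1).toNat = j} := by
    intro j hj
    rw [mem_range] at hj
    rw [nondegIterCount, ← Set.ncard_coe_finset]
    congr 1
    ext m
    simp only [Set.mem_ofPred_eq, coe_filter, mem_Icc]
    have hle := ceil_mul_div_le_iff hp hq m
    constructor
    · rintro ⟨hm, hqm, hc⟩
      have := one_le_ceil_mul_div hp hq hm
      have hmq : m ≠ q := by rintro rfl; exact hqm dvd_rfl
      have := hle.mp (by omega)
      omega
    · rintro ⟨⟨hm, hmq⟩, hc⟩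
      have := one_le_ceil_mul_div hp hq hm
      exact ⟨hm, fun hdvd => by have := Nat.le_of_dvd hm hdvd; omega, by omega⟩
  rw [sum_congr rfl hfiber, ← card_eq_sum_card_fiberwise, Nat.card_Icc, Nat.add_sub_cancel]
  intro m hm
  simp only [coe_Icc, Set.mem_Icc, coe_range, Set.mem_Iio] at hm ⊢
  have := one_le_ceil_mul_div hp hq hm.1
  have := (ceil_mul_div_le_iff hp hq m).mpr (by omega)
  omega

theorem degenIterCount_eq_zero_of_lt (hp : 0 < p) {d : ℤ} (hd : d < 2 * p - 3) :
    degenIterCount p d = 0 := by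
  rw [degenIterCount]
  convert Set.ncard_empty ℕ
  refine Set.eq_empty_of_forall_notMem ?_
  rintro m ⟨hm, rfl⟩
  have : (p : ℤ) ≤ m * p := le_mul_of_one_le_left (by positivity) (by exact_mod_cast hm)
  linarith

theorem degenIterCount_of_even {d : ℤ} (hd : Even d) : degenIterCount p d = 0 := by
  rw [degenIterCount]
  convert Set.ncard_empty ℕ
  refine Set.eq_empty_of_forall_notMem ?_
  rintro m ⟨-, rfl⟩
  exact Int.not_even_iff_odd.mpr ⟨m * p - 2, by ring⟩ hd

theorem degenIterCount_two_mul_sub_three (hp : 0 < p) : degenIterCount p (2 * p - 3) = 1 := by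
  rw [degenIterCount, Set.ncard_eq_one]
  refine ⟨1, Set.ext fun m => ?_⟩
  simp only [Set.mem_ofPred_eq, Set.mem_singleton_iff]
  constructor
  · rintro ⟨-, h⟩
    have : (m : ℤ) * p = 1 * p := by linarith
    exact_mod_cast mul_right_cancel₀ (by positivity) this
  · rintro rfl
    simp

theorem sum_range_degenIterCount (hp : 0 < p) :
    ∑ j ∈ range p, degenIterCount p (2 * j - 1) = 1 := by
  obtain ⟨p, rfl⟩ := Nat.exists_eq_add_of_lt hp
  rw [sum_range_succ, sum_eq_zero fun j hj => degenIterCount_eq_zero_of_lt hp ?_]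
  · rw [zero_add]
    convert degenIterCount_two_mul_sub_three hp using 2
    push_cast
    ring
  · rw [mem_range] at hj
    push_cast
    omega

theorem sum_range_ite_nonneg_even (p : ℕ) :
    ∑ j ∈ range p, (if 0 ≤ (2 * j - 2 : ℤ) ∧ Even (2 * j - 2 : ℤ) then (1 : ℚ) else 0) =
      (p - 1 : ℕ) := by
  cases p with
  | zero => simp
  | succ p =>
    rw [sum_range_succ']
    simp [parity_simps]

end

theorem case_2_series_contradiction_general
    (p q : ℕ) (hp : 1 ≤ p) (hpq : p < q)
    (k₁ : ℕ) (hk₁ : k₁ = q - 1 - p)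
    (M P : LaurentSeries ℚ)
    (hM : ∀ d : ℤ, M.coeff d =
      (Set.ncard {m : ℕ | 1 ≤ m ∧ ¬ (q ∣ m) ∧ 2 * ⌈((m : ℚ) * (p : ℚ)) / (q : ℚ)⌉ - 4 = d} : ℚ)
        + (k₁ : ℚ) * (Set.ncard {m : ℕ | 1 ≤ m ∧ 2 * (m : ℤ) * (p : ℤ) - 3 = d} : ℚ))
    (hP : ∀ d : ℤ, P.coeff d = if 0 ≤ d ∧ Even d then 1 else 0) :
    ¬ ∃ U : LaurentSeries ℚ, (∀ d : ℤ, 0 ≤ U.coeff d) ∧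
        M - P = (1 + HahnSeries.single (1 : ℤ) (1 : ℚ)) * U := by
  rintro ⟨U, hU, hMPU⟩
  have hq : 0 < q := by omega
  have hMP (d : ℤ) : (M - P).coeff d = nondegIterCount p q d + k₁ * degenIterCount p d
      - if 0 ≤ d ∧ Even d then 1 else 0 := by
    rw [coeff_sub, hM, hP, nondegIterCount, degenIterCount]
  have hU₃ : U.coeff (-3) = 0 := by
    refine coeff_eq_zero_of_coeff_one_add_single_one_mul (n := -2) (fun d hd => ?_) (by norm_num)
    rw [← hMPU, hMP, nondegIterCount_eq_zero_of_lt hp hq hd,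
      degenIterCount_eq_zero_of_lt hp (by omega), if_neg (by omega)]
    simp
  have heven : ∑ j ∈ range p, (M - P).coeff (2 * j - 2) = q - p := by
    have hdeg (j : ℕ) : Even (2 * (j : ℤ) - 2) := ⟨j - 1, by ring⟩
    simp only [hMP, degenIterCount_of_even (hdeg _), CharP.cast_eq_zero, mul_zero, add_zero,
      sum_sub_distrib, ← Nat.cast_sum, sum_range_nondegIterCount hp hq, sum_range_ite_nonneg_even]
    push_cast [Nat.cast_sub hp, Nat.cast_sub hq]
    ring
  have hodd : ∑ j ∈ range p, (M - P).coeff (2 * j - 1) = k₁ := by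
    have hdeg (j : ℕ) : Odd (2 * (j : ℤ) - 1) := ⟨j - 1, by ring⟩
    simp only [hMP, nondegIterCount_of_odd (hdeg _), Int.not_even_iff_odd.mpr (hdeg _), and_false,
      if_false, CharP.cast_eq_zero, zero_add, sub_zero, ← mul_sum, ← Nat.cast_sum,
      sum_range_degenIterCount hp, Nat.cast_one, mul_one]
  have htel : ∑ j ∈ range p, ((M - P).coeff (2 * j - 1) - (M - P).coeff (2 * j - 2)) =
      U.coeff (2 * p - 3) - U.coeff (-3) := by
    convert sum_range_sub_of_eq_add_pred (f := (M - P).coeff) (U := U.coeff)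
      (fun d => by rw [hMPU, coeff_one_add_single_one_mul]) (-2) p using 3 <;> ring_nf
  rw [sum_sub_distrib, heven, hodd, hU₃, sub_zero] at htel
  have := hU (2 * p - 3)
  rw [← htel, hk₁] at this
  push_cast [Nat.cast_sub (show 1 ≤ q by omega), Nat.cast_sub (show p ≤ q - 1 by omega)] at this
  linarith

/-- The concluding contradiction of Case 2: with `p, q` coprime, `1 ≤ p < q`, `q ≥ 2`,
`2p ≠ q`, and `k₁ = q - 1 - p`, the formal Laurent series `M` whose coefficient in degree `d`
is `#{m ≥ 1 : q ∤ m, 2⌈mp/q⌉ - 4 = d} + k₁·#{m ≥ 1 : 2mp - 3 = d}` cannot satisfy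
`M - ∑_{m ≥ 0} t^{2m} = (1 + t)·U` with `U` having nonnegative coefficients. -/
theorem case_2_series_contradiction
    (p q : ℕ) (hcop : Nat.Coprime p q) (hp : 1 ≤ p) (hpq : p < q) (hq : 2 ≤ q)
    (hne : 2 * p ≠ q)
    (k₁ : ℕ) (hk₁ : k₁ = q - 1 - p)
    (M P : LaurentSeries ℚ)
    (hM : ∀ d : ℤ, M.coeff d =
      (Set.ncard {m : ℕ | 1 ≤ m ∧ ¬ (q ∣ m) ∧ 2 * ⌈((m : ℚ) * (p : ℚ)) / (q : ℚ)⌉ - 4 = d} : ℚ)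
        + (k₁ : ℚ) * (Set.ncard {m : ℕ | 1 ≤ m ∧ 2 * (m : ℤ) * (p : ℤ) - 3 = d} : ℚ))
    (hP : ∀ d : ℤ, P.coeff d = if 0 ≤ d ∧ Even d then 1 else 0) :
    ¬ ∃ U : LaurentSeries ℚ, (∀ d : ℤ, 0 ≤ U.coeff d) ∧
        M - P = (1 + HahnSeries.single (1 : ℤ) (1 : ℚ)) * U :=
  case_2_series_contradiction_general p q hp hpq k₁ hk₁ M P hM hP
end
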